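/- Let G be a connected finite simple undirected graph and S ⊆ V with |S| = 3. Then S is not a minimal perfect critical set of G. -/

import Mathlib

/-!
Let `y` be an eigenvector, for the eigenvalue `λ`, whose support is exactly `S = {a, b, c}`.
For a vertex `w ∉ S` the `w`-th row of `L y = λ y` says that the values of `y` on the
neighbours of `w` in `S` sum to zero. If `λ ≠ 0`, then `1ᵀ L = 0` forces `y a + y b + y c = 0`,
and as these three values are nonzero, `w` is adjacent to all of `S` or to none of it; if
`λ = 0`, then `y` is constant along edges, so `w` has no neighbour in `S` at all. By pigeonhole
on the three possible edges inside `S`, some vertex of `S` is adjacent to both or neither of the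
other two, which are therefore twins. For twins `u ≠ v`, the vector `e_u - e_v` is an
eigenvector, so `{u, v} ⊂ S` is a perfect critical set.
-/

open Matrix
open scoped Classical

/-- `S` is a critical set of `G`: `S` is nonempty and there is a nonzero eigenvector of the
Laplacian of `G` vanishing outside `S`. -/
def IsCriticalSet {V : Type*} [Fintype V] [DecidableEq V] (G : SimpleGraph V) (S : Set V) :
    Prop :=
  S.Nonempty ∧ ∃ (lam : ℝ) (y : V → ℝ), y ≠ 0 ∧
    G.lapMatrix ℝ *ᵥ y = lam • y ∧ ∀ v ∉ S, y v = 0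

/-- `S` is a perfect critical set of `G`: some inducing eigenvector vanishes outside `S` and is
nonzero at every vertex of `S`. -/
def IsPerfectCriticalSet {V : Type*} [Fintype V] [DecidableEq V] (G : SimpleGraph V)
    (S : Set V) : Prop :=
  S.Nonempty ∧ ∃ (lam : ℝ) (y : V → ℝ), y ≠ 0 ∧
    G.lapMatrix ℝ *ᵥ y = lam • y ∧ (∀ v ∉ S, y v = 0) ∧ ∀ v ∈ S, y v ≠ 0

/-- `S` is a minimal perfect critical set of `G`: a perfect critical set none of whose proper
subsets is a perfect critical set. -/
def IsMinimalPerfectCriticalSet {V : Type*} [Fintype V] [DecidableEq V] (G : SimpleGraph V)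
    (S : Set V) : Prop :=
  IsPerfectCriticalSet G S ∧ ∀ T : Set V, T ⊂ S → ¬ IsPerfectCriticalSet G T

theorem iff_and_iff_of_ite_add_ite_add_ite_eq_zero {R : Type*} [AddCommGroup R] {p q r : Prop}
    [Decidable p] [Decidable q] [Decidable r] {x y z : R} (hx : x ≠ 0) (hy : y ≠ 0)
    (hz : z ≠ 0) (hxyz : x + y + z = 0)
    (h : (if p then x else 0) + (if q then y else 0) + (if r then z else 0) = 0) :
    (p ↔ q) ∧ (q ↔ r) := by
  by_cases p <;> by_cases q <;> by_cases r <;> simp_all <;> grind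

namespace SimpleGraph

section Laplacian

variable {V R : Type*} [Fintype V] [DecidableEq V] (G : SimpleGraph V) [DecidableRel G.Adj]

theorem sum_lapMatrix_mulVec [CommRing R] (y : V → R) : ∑ v, (G.lapMatrix R *ᵥ y) v = 0 := by
  have h : (fun _ ↦ 1) ᵥ* G.lapMatrix R = 0 := by
    rw [← mulVec_transpose, G.isSymm_lapMatrix R, lapMatrix_mulVec_const_eq_zero]
  simpa [dotProduct, h] using dotProduct_mulVec (fun _ ↦ (1 : R)) (G.lapMatrix R) y

theorem sum_eq_zero_of_lapMatrix_mulVec_eq_smul [Field R] {lam : R} (hlam : lam ≠ 0) {y : V → R}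
    (hy : G.lapMatrix R *ᵥ y = lam • y) : ∑ v, y v = 0 := by
  have := G.sum_lapMatrix_mulVec y
  simp only [hy, Pi.smul_apply, smul_eq_mul, ← Finset.mul_sum] at this
  exact (mul_eq_zero.mp this).resolve_left hlam

theorem sum_neighborFinset_eq_zero_of_lapMatrix_mulVec_eq_smul [CommRing R] {lam : R}
    {y : V → R} (hy : G.lapMatrix R *ᵥ y = lam • y) {w : V} (hw : y w = 0) :
    ∑ u ∈ G.neighborFinset w, y u = 0 := by
  simpa [lapMatrix_mulVec_apply, hw] using congrFun hy w

end Laplacian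

section Twins

variable {V : Type*} (G : SimpleGraph V)

def AreTwins (a b : V) : Prop := ∀ w, w ≠ a → w ≠ b → (G.Adj w a ↔ G.Adj w b)

variable {G} {a b c : V}

theorem AreTwins.adj_swap_iff [DecidableEq V] (h : G.AreTwins a b) {x y : V} :
    G.Adj (Equiv.swap a b x) (Equiv.swap a b y) ↔ G.Adj x y := by
  unfold AreTwins at h
  simp only [Equiv.swap_apply_def]
  split_ifs <;> subst_vars <;> grind [G.adj_comm, SimpleGraph.irrefl]

theorem AreTwins.degree_eq [Fintype V] [DecidableEq V] [DecidableRel G.Adj]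
    (h : G.AreTwins a b) : G.degree a = G.degree b := by
  convert Iso.degree_eq (RelIso.mk (Equiv.swap a b) h.adj_swap_iff) b using 2
  simp

theorem AreTwins.isPerfectCriticalSet_pair [Fintype V] [DecidableEq V] (h : G.AreTwins a b)
    (hab : a ≠ b) : IsPerfectCriticalSet G {a, b} := by
  refine ⟨⟨a, by simp⟩, G.degree a + if G.Adj a b then 1 else 0,
    Pi.single a 1 - Pi.single b 1, fun h0 => by simpa [hab] using congrFun h0 a, ?_, ?_, ?_⟩
  · ext v
    simp only [lapMatrix_mulVec_apply, Finset.sum_sub_distrib, Pi.sub_apply, Pi.single_apply,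
      Finset.sum_ite_eq', mem_neighborFinset, Pi.smul_apply, smul_eq_mul]
    rcases eq_or_ne v a with rfl | hva
    · simp [hab]
    rcases eq_or_ne v b with rfl | hvb
    · simp [hva, h.degree_eq, G.adj_comm]
      ring
    · simp [hva, hvb, h v hva hvb]
  · intro v hv
    simp_all
  · intro v hv
    rcases hv with rfl | rfl <;> simp [hab, hab.symm]

theorem exists_areTwins_of_forall_adj_iff_adj (hab : a ≠ b) (hac : a ≠ c) (hbc : b ≠ c)
    (h : ∀ w ∉ ({a, b, c} : Set V), (G.Adj w a ↔ G.Adj w b) ∧ (G.Adj w b ↔ G.Adj w c)) :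
    ∃ u v, u ≠ v ∧ ({u, v} : Set V) ⊂ {a, b, c} ∧ G.AreTwins u v := by
  have hpigeon :
      (G.Adj c a ↔ G.Adj c b) ∨ (G.Adj b a ↔ G.Adj b c) ∨ (G.Adj a b ↔ G.Adj a c) := by
    simp only [G.adj_comm c, G.adj_comm b a]
    tauto
  rcases hpigeon with hc | hb | ha
  · refine ⟨a, b, hab, by grind [Set.ssubset_iff_of_subset], fun w hwa hwb => ?_⟩
    rcases eq_or_ne w c with rfl | hwc
    · exact hc
    · exact (h w (by simp [*])).1
  · refine ⟨a, c, hac, by grind [Set.ssubset_iff_of_subset], fun w hwa hwc => ?_⟩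
    rcases eq_or_ne w b with rfl | hwb
    · exact hb
    · exact (h w (by simp [*])).1.trans (h w (by simp [*])).2
  · refine ⟨b, c, hbc, by grind [Set.ssubset_iff_of_subset], fun w hwb hwc => ?_⟩
    rcases eq_or_ne w a with rfl | hwa
    · exact ha
    · exact (h w (by simp [*])).2

end Twins

end SimpleGraph

section CriticalSets

variable {V : Type*} [Fintype V] [DecidableEq V] {G : SimpleGraph V}

theorem IsPerfectCriticalSet.adj_iff_adj_of_notMem_triple {a b c : V}
    (hS : IsPerfectCriticalSet G {a, b, c}) (hab : a ≠ b) (hac : a ≠ c) (hbc : b ≠ c) {w : V}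
    (hw : w ∉ ({a, b, c} : Set V)) : (G.Adj w a ↔ G.Adj w b) ∧ (G.Adj w b ↔ G.Adj w c) := by
  obtain ⟨-, lam, y, -, hy, hout, hin⟩ := hS
  have hyw : y w = 0 := hout w hw
  by_cases hlam : lam = 0
  · have hadj := G.lapMatrix_mulVec_eq_zero_iff_forall_adj.1 (by rw [hy, hlam, zero_smul])
    have hnadj : ∀ u ∈ ({a, b, c} : Set V), ¬G.Adj w u := fun u hu hwu =>
      hin u hu ((hadj w u hwu).symm.trans hyw)
    simp [hnadj a (by simp), hnadj b (by simp), hnadj c (by simp)]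
  · have hsupp : y = Pi.single a (y a) + Pi.single b (y b) + Pi.single c (y c) := by
      ext v
      by_cases hv : v ∈ ({a, b, c} : Set V)
      · rcases hv with rfl | rfl | rfl <;> simp [*, Ne.symm]
      · simp_all
    have hsum := G.sum_eq_zero_of_lapMatrix_mulVec_eq_smul hlam hy
    have hnbr := G.sum_neighborFinset_eq_zero_of_lapMatrix_mulVec_eq_smul hy hyw
    rw [hsupp] at hsum hnbr
    simp only [Pi.add_apply, Finset.sum_add_distrib, Finset.sum_pi_single', Finset.mem_univ,
      if_true, SimpleGraph.mem_neighborFinset] at hsum hnbr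
    exact iff_and_iff_of_ite_add_ite_add_ite_eq_zero (hin a (by simp)) (hin b (by simp))
      (hin c (by simp)) hsum hnbr

theorem IsMinimalPerfectCriticalSet.not_areTwins {S : Set V}
    (hS : IsMinimalPerfectCriticalSet G S) {u v : V} (huv : u ≠ v) (hsub : {u, v} ⊂ S) :
    ¬G.AreTwins u v :=
  fun htwin => hS.2 _ hsub (htwin.isPerfectCriticalSet_pair huv)

end CriticalSets

theorem no_mpcs_card_three_general {V : Type*} [Fintype V] [DecidableEq V]
    (G : SimpleGraph V) (S : Set V) (hS : S.ncard = 3) :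
    ¬ IsMinimalPerfectCriticalSet G S := by
  obtain ⟨a, b, c, hab, hac, hbc, rfl⟩ := Set.ncard_eq_three.mp hS
  intro hmin
  obtain ⟨u, v, huv, hsub, htwin⟩ :=
    SimpleGraph.exists_areTwins_of_forall_adj_iff_adj hab hac hbc fun _ hw =>
      hmin.1.adj_iff_adj_of_notMem_triple hab hac hbc hw
  exact hmin.not_areTwins huv hsub htwin

/-- Theorem 4: no three-element set is a minimal perfect critical set of a connected graph. -/
theorem no_mpcs_card_three {V : Type*} [Fintype V] [DecidableEq V]
    (G : SimpleGraph V) (hG : G.Connected) (S : Set V) (hS : S.ncard = 3) :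
    ¬ IsMinimalPerfectCriticalSet G S :=
  no_mpcs_card_three_general G S hS
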